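/- arXiv:2211.00368 — 3 statements merged into one kernel-verified Lean document; each statement's English description precedes it below -/
import Mathlib

section
/- Let A : ℝ³ → ℝ³ be a linear and invertible map satisfying A(a × b) = (A a) × (A b) for all vectors a, b ∈ ℝ³. Then A preserves the inner product: (A a) ⬝ (A b) = a ⬝ b for all a, b ∈ ℝ³ (hence A ∈ O(3), in fact A ∈ SO(3)). -/
/-!
Expanding the vector triple product gives `(a × b) × (a × c) = (a ⬝ (b × c)) a`. Applying `A`
and using that it commutes with `×` turns the left side into `(A a ⬝ (A b × A c)) A a`, so for
`a ≠ 0` (hence `A a ≠ 0`) the map `A` preserves the scalar triple product. Since every standard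
basis vector is a cross product `eᵢ = eᵢ₊₁ × eᵢ₊₂`, this says that `A a ⬝ A b = a ⬝ b` for `b` in
a basis, and hence for all `b` by linearity.
-/

open Matrix

theorem cross_cross_cross_eq_smul {R : Type*} [CommRing R] (a b c : Fin 3 → R) :
    (a ⨯₃ b) ⨯₃ (a ⨯₃ c) = (a ⬝ᵥ b ⨯₃ c) • a := by
  rw [cross_cross_eq_smul_sub_smul', dot_self_cross, zero_smul, sub_zero, dotProduct_comm,
    triple_product_permutation c]

theorem triple_product_map_of_map_cross {R : Type*} [CommRing R] [IsDomain R]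
    (f : (Fin 3 → R) →ₗ[R] (Fin 3 → R)) (hf : Function.Injective f)
    (hcross : ∀ a b, f (a ⨯₃ b) = f a ⨯₃ f b) (a b c : Fin 3 → R) :
    f a ⬝ᵥ f b ⨯₃ f c = a ⬝ᵥ b ⨯₃ c := by
  rcases eq_or_ne a 0 with rfl | ha
  · simp
  have hfa : f a ≠ 0 := (map_ne_zero_iff f hf).mpr ha
  have h := congrArg f (cross_cross_cross_eq_smul a b c)
  rw [hcross, hcross, hcross, map_smul, cross_cross_cross_eq_smul] at h
  exact smul_left_injective R hfa h

theorem single_one_eq_cross {R : Type*} [CommRing R] (i : Fin 3) :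
    (Pi.single i 1 : Fin 3 → R) = Pi.single (i + 1) 1 ⨯₃ Pi.single (i + 2) 1 := by
  ext j
  fin_cases i <;> fin_cases j <;> simp [cross_apply]

/-- If a linear invertible map `A : ℝ³ → ℝ³` preserves the cross product,
then it preserves the Euclidean inner product. -/
theorem cross_preserving_implies_inner_preserving
    (A : (Fin 3 → ℝ) →ₗ[ℝ] (Fin 3 → ℝ)) (hA : Function.Bijective A)
    (hcross : ∀ a b : Fin 3 → ℝ, A (crossProduct a b) = crossProduct (A a) (A b)) :
    ∀ a b : Fin 3 → ℝ, (A a) ⬝ᵥ (A b) = a ⬝ᵥ b := by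
  intro a b
  have h : dotProductBilin ℝ ℝ (A a) ∘ₗ A = dotProductBilin ℝ ℝ a :=
    (Pi.basisFun ℝ (Fin 3)).ext fun i => by
      simpa [single_one_eq_cross i, hcross] using
        triple_product_map_of_map_cross A hA.injective hcross a _ _
  exact LinearMap.congr_fun h b
end

section
/- Let H be a finite-dimensional complex inner product space, let Ŝ_1, …, Ŝ_p be linear operators on H with ‖Ŝ_j‖ ≤ 1 for all j, let e and m be unit vectors in H, and let x_1, …, x_p be real numbers with |x_j| ≤ 1. Suppose that for each j, ⟨e, Ŝ_j e⟩ = x_j, and suppose that for each j there is a constant δ > 0 such that |⟨m', Ŝ_j e⟩| ≤ δ for every unit vector m' orthogonal to e, with moreover Ŝ_j e − x_j e supported on a one-dimensional space spanned by a fixed unit vector f orthogonal to e (i.e., Ŝ_j e = x_j e + c_j f with |c_j| ≤ δ). Then |⟨e, Ŝ_1 ⋯ Ŝ_p e⟩ − x_1 ⋯ x_p| ≤ p δ. -/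
/-!
Write `A = Ŝ₁ ⋯ Ŝₚ`. Since `Ŝₚ₊₁ e = xₚ₊₁ e + cₚ₊₁ f`,
`⟨e, A Ŝₚ₊₁ e⟩ - x₁ ⋯ xₚ₊₁ = xₚ₊₁ (⟨e, A e⟩ - x₁ ⋯ xₚ) + cₚ₊₁ ⟨e, A f⟩`.
As `‖A‖ ≤ 1` and `|xₚ₊₁| ≤ 1`, each new factor adds at most `|cₚ₊₁| ≤ δ` to the error,
which therefore grows at most linearly in `p`.
-/

theorem List.norm_prod_le_one {α : Type*} [SeminormedRing α] (h₁ : ‖(1 : α)‖ ≤ 1) :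
    ∀ {l : List α}, (∀ a ∈ l, ‖a‖ ≤ 1) → ‖l.prod‖ ≤ 1
  | [], _ => by simpa using h₁
  | a :: l, hl => by
    rw [List.prod_cons]
    exact (norm_mul_le a l.prod).trans <| mul_le_one₀ (hl a List.mem_cons_self) (norm_nonneg _)
      (List.norm_prod_le_one h₁ fun b hb => hl b (List.mem_cons_of_mem a hb))

theorem ContinuousLinearMap.norm_list_ofFn_prod_le_one {𝕜 E : Type*} [NontriviallyNormedField 𝕜]
    [SeminormedAddCommGroup E] [NormedSpace 𝕜 E] {p : ℕ} (S : Fin p → E →L[𝕜] E)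
    (hS : ∀ j, ‖S j‖ ≤ 1) : ‖(List.ofFn S).prod‖ ≤ 1 :=
  List.norm_prod_le_one ContinuousLinearMap.norm_id_le <| by
    simpa only [List.forall_mem_ofFn_iff] using hS

section

variable {𝕜 E : Type*} [RCLike 𝕜] [NormedAddCommGroup E] [InnerProductSpace 𝕜 E]

open scoped InnerProductSpace

theorem norm_inner_mul_apply_sub_mul_le {A T : E →L[𝕜] E} (hA : ‖A‖ ≤ 1) {e f : E}
    (he : ‖e‖ ≤ 1) (hf : ‖f‖ ≤ 1) {x c : 𝕜} (hT : T e = x • e + c • f) (y : 𝕜) :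
    ‖⟪e, (A * T) e⟫_𝕜 - y * x‖ ≤ ‖x‖ * ‖⟪e, A e⟫_𝕜 - y‖ + ‖c‖ := by
  have hAf : ‖⟪e, A f⟫_𝕜‖ ≤ 1 :=
    calc ‖⟪e, A f⟫_𝕜‖ ≤ ‖e‖ * (‖A‖ * ‖f‖) :=
          (norm_inner_le_norm _ _).trans (mul_le_mul_of_nonneg_left (A.le_opNorm f) (norm_nonneg e))
      _ ≤ 1 := mul_le_one₀ he (by positivity) (mul_le_one₀ hA (norm_nonneg f) hf)
  have hsplit : ⟪e, (A * T) e⟫_𝕜 - y * x = x * (⟪e, A e⟫_𝕜 - y) + c * ⟪e, A f⟫_𝕜 := by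
    rw [mul_apply_eq_comp, hT, map_add, map_smul, map_smul, inner_add_right,
      inner_smul_right, inner_smul_right]
    ring
  calc ‖⟪e, (A * T) e⟫_𝕜 - y * x‖ ≤ ‖x‖ * ‖⟪e, A e⟫_𝕜 - y‖ + ‖c‖ * ‖⟪e, A f⟫_𝕜‖ := by
        rw [hsplit, ← norm_mul, ← norm_mul]
        exact norm_add_le _ _
    _ ≤ ‖x‖ * ‖⟪e, A e⟫_𝕜 - y‖ + ‖c‖ := by
        gcongr
        exact mul_le_of_le_one_right (norm_nonneg c) hAf

theorem norm_inner_list_ofFn_prod_apply_sub_prod_le {e f : E} (he : ‖e‖ = 1) (hf : ‖f‖ ≤ 1)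
    {δ : ℝ} : ∀ {p : ℕ} (S : Fin p → E →L[𝕜] E), (∀ j, ‖S j‖ ≤ 1) →
    ∀ (x c : Fin p → 𝕜), (∀ j, ‖x j‖ ≤ 1) → (∀ j, ‖c j‖ ≤ δ) →
    (∀ j, S j e = x j • e + c j • f) →
    ‖⟪e, (List.ofFn S).prod e⟫_𝕜 - ∏ j, x j‖ ≤ p * δ
  | 0, _, _, _, _, _, _, _ => by simp [he]
  | p + 1, S, hS, x, c, hx, hc, hact => by
    have ih := norm_inner_list_ofFn_prod_apply_sub_prod_le he hf (fun j => S j.castSucc)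
      (fun j => hS _) (fun j => x j.castSucc) (fun j => c j.castSucc) (fun j => hx _)
      (fun j => hc _) (fun j => hact _)
    have hstep := norm_inner_mul_apply_sub_mul_le
      (ContinuousLinearMap.norm_list_ofFn_prod_le_one _ fun j => hS j.castSucc) he.le hf
      (hact (Fin.last p)) (∏ j : Fin p, x j.castSucc)
    rw [List.ofFn_succ', List.prod_concat, Fin.prod_univ_castSucc]
    calc _ ≤ _ := hstep
      _ ≤ 1 * (p * δ) + δ := by gcongr; exacts [hx _, hc _]
      _ = ((p + 1 : ℕ) : ℝ) * δ := by push_cast; ring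

end

theorem expectation_product_estimate_general
    {H : Type*} [NormedAddCommGroup H] [InnerProductSpace ℂ H]
    (p : ℕ) (S : Fin p → (H →L[ℂ] H)) (hS : ∀ j, ‖S j‖ ≤ 1)
    (e f : H) (he : ‖e‖ = 1) (hf : ‖f‖ = 1)
    (x : Fin p → ℝ) (hx : ∀ j, |x j| ≤ 1)
    (δ : ℝ)
    (c : Fin p → ℂ) (hc : ∀ j, ‖c j‖ ≤ δ)
    (hact : ∀ j, (S j) e = (x j : ℂ) • e + (c j) • f) :
    ‖(inner ℂ e ((List.ofFn S).prod e) : ℂ) - ∏ j, (x j : ℂ)‖ ≤ p * δ :=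
  norm_inner_list_ofFn_prod_apply_sub_prod_le he hf.le S hS (fun j => (x j : ℂ)) c
    (fun j => by simpa only [Complex.norm_real, Real.norm_eq_abs] using hx j) hc hact

/-- Abstract version of Lemma 3: if operators `Ŝ j` of norm at most one have
coherent-state expectations `x j` and satisfy `Ŝ j e = x j • e + c j • f` with `|c j| ≤ δ`
for unit vectors `e ⊥ f`, then the expectation of their product differs from the
product `x 1 ⋯ x p` by at most `p δ`. -/
theorem expectation_product_estimate
    {H : Type*} [NormedAddCommGroup H] [InnerProductSpace ℂ H] [FiniteDimensional ℂ H]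
    (p : ℕ) (S : Fin p → (H →L[ℂ] H)) (hS : ∀ j, ‖S j‖ ≤ 1)
    (e f : H) (he : ‖e‖ = 1) (hf : ‖f‖ = 1) (hef : (inner ℂ e f : ℂ) = 0)
    (x : Fin p → ℝ) (hx : ∀ j, |x j| ≤ 1)
    (hdiag : ∀ j, (inner ℂ e ((S j) e) : ℂ) = (x j : ℂ))
    (δ : ℝ) (hδ : 0 < δ)
    (c : Fin p → ℂ) (hc : ∀ j, ‖c j‖ ≤ δ)
    (hact : ∀ j, (S j) e = (x j : ℂ) • e + (c j) • f) :
    ‖(inner ℂ e ((List.ofFn S).prod e) : ℂ) - ∏ j, (x j : ℂ)‖ ≤ p * δ :=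
  expectation_product_estimate_general p S hS e f he hf x hx δ c hc hact
end

section
/- For the Heisenberg dimer partition function Z_s(β) = Σ_{S=0}^{2s} (2S+1) exp(−(β/s²)(½S(S+1) − s(s+1))), the scaled quantity (2s+1)^{−2} Z_s(β) converges as s → ∞ to the classical dimer partition function Z_cl(β) = sinh(β)/β. -/
open Filter Topology Finset Real

/-! With `c = 2β/n²` the summand factors as `exp (β (n+2)/n) · (2S+1) e^{-c S(S+1)}`.
Since `S² ≤ S(S+1) ≤ (S+1)²`, both `c(2S+1) e^{-c S(S+1)}` and the increment
`e^{-c S²} - e^{-c (S+1)²}` lie in `[c(2S+1) e^{-c(S+1)²}, c(2S+1) e^{-c S²}]`. The increments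
telescope to `1 - e^{-c(n+1)²}` and the interval lengths add up to `O(c n)`, so
`(n+1)⁻² Σ (2S+1) e^{-c S(S+1)} → (1 - e^{-2β})/(2β) = ∫₀¹ 2x e^{-2βx²} dx`,
while the prefactor tends to `e^β`. -/

lemma sub_mul_exp_neg_le_exp_neg_sub_exp_neg (u v : ℝ) :
    (v - u) * exp (-v) ≤ exp (-u) - exp (-v) := by
  have h : exp (-u) = exp (-v) * exp (v - u) := by rw [← exp_add]; ring_nf
  nlinarith [add_one_le_exp (v - u), exp_pos (-v)]

lemma exp_neg_sub_exp_neg_le_sub_mul_exp_neg (u v : ℝ) :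
    exp (-u) - exp (-v) ≤ (v - u) * exp (-u) := by
  have h : exp (-v) = exp (-u) * exp (u - v) := by rw [← exp_add]; ring_nf
  nlinarith [add_one_le_exp (u - v), exp_pos (-u)]

lemma abs_sub_mul_exp_neg_sub_le {u t v : ℝ} (hut : u ≤ t) (htv : t ≤ v) :
    |(v - u) * exp (-t) - (exp (-u) - exp (-v))| ≤ (v - u) * (exp (-u) - exp (-v)) := by
  have hvt : exp (-v) ≤ exp (-t) := exp_le_exp.mpr (by linarith)
  have htu : exp (-t) ≤ exp (-u) := exp_le_exp.mpr (by linarith)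
  have hvu : 0 ≤ v - u := by linarith
  have hlow := sub_mul_exp_neg_le_exp_neg_sub_exp_neg u v
  have hupp := exp_neg_sub_exp_neg_le_sub_mul_exp_neg u v
  rw [abs_le]
  constructor <;> nlinarith [mul_le_mul_of_nonneg_left hvt hvu, mul_le_mul_of_nonneg_left htu hvu]

noncomputable def dimerWeightSum (c : ℝ) (N : ℕ) : ℝ :=
  ∑ S ∈ range N, (2 * (S : ℝ) + 1) * exp (-(c * ((S : ℝ) * ((S : ℝ) + 1))))

lemma sum_range_exp_neg_mul_sq_sub (c : ℝ) (N : ℕ) :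
    ∑ S ∈ range N, (exp (-(c * (S : ℝ) ^ 2)) - exp (-(c * ((S : ℝ) + 1) ^ 2)))
      = 1 - exp (-(c * (N : ℝ) ^ 2)) := by
  have h := sum_range_sub' (fun S : ℕ => exp (-(c * (S : ℝ) ^ 2))) N
  push_cast at h
  simpa using h

lemma abs_mul_dimerWeightSum_sub_le {c : ℝ} (hc : 0 ≤ c) (N : ℕ) :
    |c * dimerWeightSum c N - (1 - exp (-(c * (N : ℝ) ^ 2)))| ≤ 2 * c * N := by
  set d : ℕ → ℝ := fun S => exp (-(c * (S : ℝ) ^ 2)) - exp (-(c * ((S : ℝ) + 1) ^ 2))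
  have hd : ∀ S : ℕ, 0 ≤ d S := fun S => sub_nonneg.mpr <| exp_le_exp.mpr <| by
    have : (S : ℝ) ^ 2 ≤ ((S : ℝ) + 1) ^ 2 := by gcongr; linarith
    nlinarith
  have hsum : ∑ S ∈ range N, d S = 1 - exp (-(c * (N : ℝ) ^ 2)) :=
    sum_range_exp_neg_mul_sq_sub c N
  have hpoint : ∀ S ∈ range N,
      |c * ((2 * (S : ℝ) + 1) * exp (-(c * ((S : ℝ) * ((S : ℝ) + 1))))) - d S|
        ≤ 2 * c * N * d S := by
    intro S hS
    have hS0 : (0 : ℝ) ≤ S := S.cast_nonneg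
    have hSN : 2 * (S : ℝ) + 1 ≤ 2 * N := by
      have : (S : ℝ) + 1 ≤ N := by exact_mod_cast mem_range.mp hS
      linarith
    have key := abs_sub_mul_exp_neg_sub_le (u := c * (S : ℝ) ^ 2)
      (t := c * ((S : ℝ) * ((S : ℝ) + 1))) (v := c * ((S : ℝ) + 1) ^ 2)
      (by gcongr; nlinarith) (by gcongr; nlinarith)
    have hvu : c * ((S : ℝ) + 1) ^ 2 - c * (S : ℝ) ^ 2 = c * (2 * S + 1) := by ring
    rw [hvu] at key
    calc _ = |c * (2 * (S : ℝ) + 1) * exp (-(c * ((S : ℝ) * ((S : ℝ) + 1)))) - d S| := by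
            rw [mul_assoc]
      _ ≤ c * (2 * S + 1) * d S := key
      _ ≤ 2 * c * N * d S := mul_le_mul_of_nonneg_right (by nlinarith) (hd S)
  calc _ = |∑ S ∈ range N,
        (c * ((2 * (S : ℝ) + 1) * exp (-(c * ((S : ℝ) * ((S : ℝ) + 1))))) - d S)| := by
        rw [sum_sub_distrib, ← mul_sum, hsum, dimerWeightSum]
    _ ≤ ∑ S ∈ range N, 2 * c * N * d S := abs_sum_le_sum_abs _ _ |>.trans (sum_le_sum hpoint)
    _ = 2 * c * N * (1 - exp (-(c * (N : ℝ) ^ 2))) := by rw [← mul_sum, hsum]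
    _ ≤ 2 * c * N := by
        have : 0 < exp (-(c * (N : ℝ) ^ 2)) := exp_pos _
        have : 0 ≤ 2 * c * N := by positivity
        nlinarith

theorem tendsto_inv_sq_mul_dimerWeightSum {c : ℕ → ℝ} {a : ℝ} (hc : ∀ n, 0 ≤ c n) (ha : a ≠ 0)
    (hlim : Tendsto (fun n : ℕ => c n * ((n : ℝ) + 1) ^ 2) atTop (𝓝 a)) :
    Tendsto (fun n : ℕ => ((n + 1 : ℝ) ^ 2)⁻¹ * dimerWeightSum (c n) (n + 1)) atTop
      (𝓝 ((1 - exp (-a)) / a)) := by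
  have hlin : Tendsto (fun n : ℕ => 2 * c n * ((n : ℝ) + 1)) atTop (𝓝 0) := by
    have h := (hlim.mul (tendsto_one_div_add_atTop_nhds_zero_nat (𝕜 := ℝ))).const_mul 2
    rw [mul_zero, mul_zero] at h
    refine h.congr fun n => ?_
    field_simp
  have hsum : Tendsto (fun n : ℕ => c n * dimerWeightSum (c n) (n + 1)) atTop
      (𝓝 (1 - exp (-a))) := by
    have hmain : Tendsto (fun n : ℕ => 1 - exp (-(c n * ((n : ℝ) + 1) ^ 2))) atTop
        (𝓝 (1 - exp (-a))) :=
      tendsto_const_nhds.sub ((continuous_exp.tendsto _).comp hlim.neg)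
    have herr : Tendsto (fun n : ℕ => c n * dimerWeightSum (c n) (n + 1)
        - (1 - exp (-(c n * ((n : ℝ) + 1) ^ 2)))) atTop (𝓝 0) :=
      squeeze_zero_norm (fun n => by
        simpa using abs_mul_dimerWeightSum_sub_le (hc n) (n + 1)) hlin
    simpa using herr.add hmain
  refine (hsum.div hlim ha).congr' ?_
  filter_upwards [hlim.eventually_ne ha] with n hn
  have hcn : c n ≠ 0 := left_ne_zero_of_mul hn
  simp only [Pi.div_apply]
  field_simp

lemma tendsto_const_div_natCast_div_add_pow (a x : ℝ) (k : ℕ) :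
    Tendsto (fun n : ℕ => a / ((n : ℝ) / (n + x)) ^ k) atTop (𝓝 a) := by
  have h := (tendsto_const_nhds (x := a)).div ((tendsto_natCast_div_add_atTop x).pow k) (by simp)
  rwa [one_pow, div_one] at h

lemma exp_mul_one_sub_exp_neg_two_mul_div (β : ℝ) :
    exp β * ((1 - exp (-(2 * β))) / (2 * β)) = sinh β / β := by
  have h : exp β * exp (-(2 * β)) = exp (-β) := by rw [← exp_add]; ring_nf
  rw [sinh_eq, mul_div_assoc', mul_sub, mul_one, h, div_div]

/-- The scaled Heisenberg dimer partition function
`(2s+1)^{-2} Σ_{S=0}^{2s} (2S+1) exp(−(β/s²)(½S(S+1) − s(s+1)))`, with `s = n/2`,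
converges as `s → ∞` to the classical dimer partition function `sinh(β)/β`. -/
theorem dimer_partition_function_classical_limit (β : ℝ) (hβ : 0 < β) :
    Tendsto (fun n : ℕ =>
      ((n + 1 : ℝ) ^ 2)⁻¹ *
        ∑ S ∈ Finset.range (n + 1), (2 * (S : ℝ) + 1) *
          Real.exp (-(β / ((n : ℝ) / 2) ^ 2) *
            ((S : ℝ) * ((S : ℝ) + 1) / 2 - ((n : ℝ) / 2) * ((n : ℝ) / 2 + 1))))
      atTop (𝓝 (Real.sinh β / β)) := by
  set c : ℕ → ℝ := fun n => β / ((n : ℝ) / 2) ^ 2 / 2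
  set A : ℕ → ℝ := fun n => β / ((n : ℝ) / 2) ^ 2 * ((n : ℝ) / 2 * ((n : ℝ) / 2 + 1))
  have hsplit : ∀ n : ℕ, ∑ S ∈ range (n + 1), (2 * (S : ℝ) + 1) *
        exp (-(β / ((n : ℝ) / 2) ^ 2) *
          ((S : ℝ) * ((S : ℝ) + 1) / 2 - ((n : ℝ) / 2) * ((n : ℝ) / 2 + 1)))
      = exp (A n) * dimerWeightSum (c n) (n + 1) := fun n => by
    rw [dimerWeightSum, mul_sum]
    refine sum_congr rfl fun S _ => ?_
    rw [mul_left_comm, ← exp_add]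
    congr 2
    simp only [A, c]
    ring
  have hA : Tendsto A atTop (𝓝 β) := by
    refine (tendsto_const_div_natCast_div_add_pow β 2 1).congr' ?_
    filter_upwards [eventually_ne_atTop 0] with n hn
    simp only [A]
    field_simp
  have hcN : Tendsto (fun n : ℕ => c n * ((n : ℝ) + 1) ^ 2) atTop (𝓝 (2 * β)) := by
    refine (tendsto_const_div_natCast_div_add_pow (2 * β) 1 2).congr' ?_
    filter_upwards [eventually_ne_atTop 0] with n hn
    simp only [c]
    field_simp
  have hlim := ((continuous_exp.tendsto β).comp hA).mul
    (tendsto_inv_sq_mul_dimerWeightSum (fun n => by positivity) (by positivity) hcN)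
  rw [exp_mul_one_sub_exp_neg_two_mul_div] at hlim
  refine hlim.congr fun n => ?_
  simp only [Function.comp_apply, hsplit]
  ring
end
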